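/- For every x ∈ ℝⁿ there exists ε₀ > 0 such that for all ε with 0 < ε < ε₀, the connected components of B(x,ε) ∖ V(f) (where B(x,ε) is the open Euclidean ball) are exactly the sets B(x,ε) ∩ U, where U ranges over the connected components of ℝⁿ ∖ V(f) whose closure contains x; moreover each such component B(x,ε) ∩ U is convex, hence contractible. -/
import Mathlib

open Set Metric

/-- If `T = u ∪ v` with `u, v` open disjoint, `u` preconnected and `y ∈ u`, then the
connected component of `y` in `T` is `u`. -/
lemma aux_comp {X : Type*} [TopologicalSpace X] {T u v : Set X} (hu : IsOpen u) (hv : IsOpen v)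
    (huv : Disjoint u v) (hT : T = u ∪ v) (hupc : IsPreconnected u) {y : X} (hy : y ∈ u) :
    connectedComponentIn T y = u := by
  have hyT : y ∈ T := by rw [hT]; exact Or.inl hy
  apply subset_antisymm
  · exact IsPreconnected.subset_left_of_subset_union hu hv huv
      (by rw [← hT]; exact connectedComponentIn_subset T y)
      ⟨y, mem_connectedComponentIn hyT, hy⟩ isPreconnected_connectedComponentIn
  · exact hupc.subset_connectedComponentIn hy (by rw [hT]; exact subset_union_left)

/-- For every `x ∈ ℝⁿ` there is `ε₀ > 0` so that for all `0 < ε < ε₀` the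
connected components of `B(x,ε) ∖ V(f)` are exactly the sets `B(x,ε) ∩ U` where `U` ranges
over the connected components of `ℝⁿ ∖ V(f)` whose closure contains `x`; each such set is
convex, hence contractible. -/
theorem stmt_3 (n : ℕ) (hn : 1 ≤ n)
    (A : Finset ((EuclideanSpace ℝ (Fin n)) × ℝ)) (hA : A.Nonempty)
    (ℓ : ((EuclideanSpace ℝ (Fin n)) × ℝ) → EuclideanSpace ℝ (Fin n) → ℝ)
    (hℓ : ∀ p x, ℓ p x = (∑ i, p.1 i * x i) + p.2)
    (f : EuclideanSpace ℝ (Fin n) → ℝ)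
    (hf : ∀ x, f x = A.sup' hA (fun p => ℓ p x))
    (V : Set (EuclideanSpace ℝ (Fin n)))
    (hV : V = {x | ∃ p ∈ A, ∃ q ∈ A, p ≠ q ∧ ℓ p x = f x ∧ ℓ q x = f x}) :
    ∀ x : EuclideanSpace ℝ (Fin n), ∃ ε₀ > (0 : ℝ), ∀ ε : ℝ, 0 < ε → ε < ε₀ →
      ({S : Set (EuclideanSpace ℝ (Fin n)) |
          ∃ y ∈ Metric.ball x ε ∩ Vᶜ, S = connectedComponentIn (Metric.ball x ε ∩ Vᶜ) y} =
        {S : Set (EuclideanSpace ℝ (Fin n)) |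
          ∃ y ∈ Vᶜ, x ∈ closure (connectedComponentIn Vᶜ y) ∧
            S = Metric.ball x ε ∩ connectedComponentIn Vᶜ y}) ∧
      (∀ y ∈ Vᶜ, x ∈ closure (connectedComponentIn Vᶜ y) →
        Convex ℝ (Metric.ball x ε ∩ connectedComponentIn Vᶜ y) ∧
        ContractibleSpace ↥(Metric.ball x ε ∩ connectedComponentIn Vᶜ y)) := by
  classical
  intro x
  set U : ((EuclideanSpace ℝ (Fin n)) × ℝ) → Set (EuclideanSpace ℝ (Fin n)) :=
    fun p => {z | ∀ q ∈ A, q ≠ p → ℓ q z < ℓ p z} with hU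
  -- basic facts
  have hle : ∀ p ∈ A, ∀ z, ℓ p z ≤ f z := by
    intro p hp z
    rw [hf]
    exact Finset.le_sup' (fun p => ℓ p z) hp
  have hattain : ∀ z, ∃ p ∈ A, ℓ p z = f z := by
    intro z
    obtain ⟨p, hp, h⟩ := A.exists_mem_eq_sup' hA (fun p => ℓ p z)
    exact ⟨p, hp, by rw [hf, h]⟩
  have hUVc : ∀ p ∈ A, U p ⊆ Vᶜ := by
    intro p hp z hz hzV
    rw [hV] at hzV
    obtain ⟨p', hp', q', hq', hne, he1, he2⟩ := hzV
    rcases ne_or_eq p' p with h1 | h1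
    · exact absurd he1 (by have := hz p' hp' h1; have := hle p hp z; linarith)
    · have h2 : q' ≠ p := h1 ▸ hne.symm
      exact absurd he2 (by have := hz q' hq' h2; have := hle p hp z; linarith)
  have hVcU : ∀ z ∈ Vᶜ, ∃ p ∈ A, z ∈ U p := by
    intro z hz
    obtain ⟨p, hp, hpe⟩ := hattain z
    refine ⟨p, hp, fun q hq hqp => ?_⟩
    rcases lt_or_eq_of_le (hle q hq z) with h | h
    · rw [hpe]; exact h
    · exact absurd (hV ▸ (⟨q, hq, p, hp, hqp, h, hpe⟩ :
        z ∈ {x | ∃ p ∈ A, ∃ q ∈ A, p ≠ q ∧ ℓ p x = f x ∧ ℓ q x = f x})) hz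
  have hVc : Vᶜ = ⋃ p ∈ A, U p := by
    ext z
    constructor
    · intro hz
      obtain ⟨p, hp, hzp⟩ := hVcU z hz
      exact mem_biUnion hp hzp
    · intro hz
      obtain ⟨p, hp, hzp⟩ := mem_iUnion₂.mp hz
      exact hUVc p hp hzp
  have hcont : ∀ p, Continuous (ℓ p) := by
    intro p
    have : (ℓ p) = fun z => (∑ i, p.1 i * z i) + p.2 := funext (hℓ p)
    rw [this]
    exact (continuous_finset_sum _ fun i _ =>
      (continuous_const.mul ((continuous_apply i).comp (PiLp.continuous_ofLp 2 _)))).add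
      continuous_const
  have hUopen : ∀ p, IsOpen (U p) := by
    intro p
    have : U p = ⋂ q ∈ A, {z | q ≠ p → ℓ q z < ℓ p z} := by
      ext z; simp [hU]
    rw [this]
    refine isOpen_biInter_finset fun q hq => ?_
    by_cases h : q = p
    · simp [h]
    · have : {z | q ≠ p → ℓ q z < ℓ p z} = {z | ℓ q z < ℓ p z} := by
        ext z; simp [h]
      rw [this]
      exact isOpen_lt (hcont q) (hcont p)
  have hUconv : ∀ p, Convex ℝ (U p) := by
    intro p
    have : U p = ⋂ q ∈ A, {z | q ≠ p → ℓ q z < ℓ p z} := by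
      ext z; simp [hU]
    rw [this]
    refine convex_iInter₂ fun q hq => ?_
    by_cases h : q = p
    · simp [h]; exact convex_univ
    · have h2 : {z | q ≠ p → ℓ q z < ℓ p z} = {z | (∑ i, (q.1 i - p.1 i) * z i) < p.2 - q.2} := by
        ext z
        simp only [mem_setOf_eq, h, ne_eq, not_false_eq_true, forall_true_left, hℓ,
          sub_mul, Finset.sum_sub_distrib]
        constructor <;> intro <;> linarith
      rw [h2]
      refine convex_halfSpace_lt ⟨fun a b => ?_, fun c a => ?_⟩ _
      · simp only [PiLp.add_apply, mul_add, Finset.sum_add_distrib]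
      · simp only [PiLp.smul_apply, smul_eq_mul, Finset.mul_sum]
        exact Finset.sum_congr rfl fun i _ => by ring
  have hUdisj : ∀ p q, p ∈ A → q ∈ A → p ≠ q → Disjoint (U p) (U q) := by
    intro p q hp hq hpq
    rw [Set.disjoint_left]
    intro z hzp hzq
    have h1 := hzp q hq (Ne.symm hpq)
    have h2 := hzq p hp hpq
    linarith
  -- the key component computation
  have hkey : ∀ p ∈ A, ∀ y ∈ U p, ∀ B : Set (EuclideanSpace ℝ (Fin n)),
      Convex ℝ B → IsOpen B → y ∈ B → connectedComponentIn (B ∩ Vᶜ) y = B ∩ U p := by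
    intro p hp y hy B hBconv hBopen hyB
    have hTeq : B ∩ Vᶜ = (B ∩ U p) ∪ (B ∩ ⋃ q ∈ A.erase p, U q) := by
      rw [← Set.inter_union_distrib_left, hVc]
      congr 1
      ext z
      simp only [mem_iUnion, mem_union, Finset.mem_erase, exists_prop]
      constructor
      · rintro ⟨q, hq, hz⟩
        by_cases h : q = p
        · exact Or.inl (h ▸ hz)
        · exact Or.inr ⟨q, ⟨h, hq⟩, hz⟩
      · rintro (hz | ⟨q, ⟨h, hq⟩, hz⟩)
        · exact ⟨p, hp, hz⟩
        · exact ⟨q, hq, hz⟩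
    refine aux_comp (hBopen.inter (hUopen p))
      (hBopen.inter (isOpen_biUnion fun q _ => hUopen q)) ?_ hTeq
      ((hBconv.inter (hUconv p)).isPreconnected) ⟨hyB, hy⟩
    refine Disjoint.mono inter_subset_right inter_subset_right ?_
    rw [Set.disjoint_iUnion₂_right]
    intro q hq
    exact hUdisj p q hp (Finset.mem_of_mem_erase hq) (Ne.symm (Finset.ne_of_mem_erase hq))
  have hkey' : ∀ p ∈ A, ∀ y ∈ U p, connectedComponentIn Vᶜ y = U p := by
    intro p hp y hy
    have := hkey p hp y hy univ convex_univ isOpen_univ (mem_univ y)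
    simpa using this
  -- choice of ε₀
  set g : ((EuclideanSpace ℝ (Fin n)) × ℝ) → ℝ :=
    fun p => if x ∈ closure (U p) ∨ ¬ (U p).Nonempty then 1 else infDist x (U p) with hg
  have hgpos : ∀ p ∈ A, 0 < g p := by
    intro p hp
    show 0 < if x ∈ closure (U p) ∨ ¬ (U p).Nonempty then 1 else infDist x (U p)
    split_ifs with h
    · exact one_pos
    · push_neg at h
      obtain ⟨h1, h2⟩ := h
      rcases lt_or_eq_of_le (infDist_nonneg (s := U p) (x := x)) with h3 | h3
      · exact h3
      · exact absurd ((mem_closure_iff_infDist_zero h2).mpr h3.symm) h1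
  refine ⟨min 1 (A.inf' hA g), lt_min one_pos ((Finset.lt_inf'_iff hA).mpr fun p hp => hgpos p hp),
    fun ε hε hεε₀ => ?_⟩
  -- key ε property
  have hεprop : ∀ p ∈ A, (ball x ε ∩ U p).Nonempty → x ∈ closure (U p) := by
    intro p hp ⟨z, hzB, hzU⟩
    by_contra hxcl
    have h1 : g p = infDist x (U p) := by
      rw [hg]; simp only [hxcl, Set.not_nonempty_iff_eq_empty, false_or, ite_eq_right_iff]
      intro h; exact absurd (h ▸ hzU) (notMem_empty z)
    have h2 : infDist x (U p) ≤ dist x z := infDist_le_dist_of_mem hzU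
    have h3 : dist x z < ε := by rw [dist_comm]; exact mem_ball.mp hzB
    have h4 : min 1 (A.inf' hA g) ≤ g p := le_trans (min_le_right _ _) (Finset.inf'_le g hp)
    linarith
  have hclne : ∀ p, x ∈ closure (U p) → (ball x ε ∩ U p).Nonempty := by
    intro p hxcl
    obtain ⟨z, hz, hdz⟩ := Metric.mem_closure_iff.mp hxcl ε hε
    exact ⟨z, mem_ball.mpr (by rwa [dist_comm]), hz⟩
  constructor
  · ext S
    simp only [mem_setOf_eq]
    constructor
    · rintro ⟨y, ⟨hyB, hyV⟩, rfl⟩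
      obtain ⟨p, hp, hyp⟩ := hVcU y hyV
      have hc1 := hkey p hp y hyp (ball x ε) (convex_ball x ε) isOpen_ball hyB
      have hc2 := hkey' p hp y hyp
      refine ⟨y, hyV, ?_, by rw [hc1, hc2]⟩
      rw [hc2]
      exact hεprop p hp ⟨y, hyB, hyp⟩
    · rintro ⟨y, hyV, hxcl, rfl⟩
      obtain ⟨p, hp, hyp⟩ := hVcU y hyV
      have hc2 := hkey' p hp y hyp
      rw [hc2] at hxcl ⊢
      obtain ⟨z, hzB, hzU⟩ := hclne p hxcl
      refine ⟨z, ⟨hzB, hUVc p hp hzU⟩, ?_⟩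
      rw [hkey p hp z hzU (ball x ε) (convex_ball x ε) isOpen_ball hzB]
  · intro y hyV hxcl
    obtain ⟨p, hp, hyp⟩ := hVcU y hyV
    have hc2 := hkey' p hp y hyp
    rw [hc2] at hxcl ⊢
    have hconv : Convex ℝ (ball x ε ∩ U p) := (convex_ball x ε).inter (hUconv p)
    exact ⟨hconv, hconv.contractibleSpace (hclne p hxcl)⟩
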